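/- In the universe D of dicot games, {0, * | *} ≥ 0 (mod D): for every dicot game X, o⁻({0,* | *} + X) ≥ o⁻(X). Nevertheless {0,* | *} is not a Left end, so this exhibits failure, in the restricted universe D, of the general misère lemma that a non-Left-end cannot be ≥ a Left end. -/

import Mathlib

namespace SetTheory

universe u

/-- Pre-games, as in the older Mathlib (`Mathlib.SetTheory.Game.PGame`), which has since been removed. -/
inductive PGame : Type (u + 1)
  | mk : ∀ α β : Type u, (α → PGame) → (β → PGame) → PGame

namespace PGame

/-- The indexing type for allowable moves by Left. -/
def LeftMoves : PGame → Type u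
  | mk l _ _ _ => l

/-- The indexing type for allowable moves by Right. -/
def RightMoves : PGame → Type u
  | mk _ r _ _ => r

/-- The new game after Left makes an allowed move. -/
def moveLeft : ∀ g : PGame, LeftMoves g → PGame
  | mk _l _ L _ => L

/-- The new game after Right makes an allowed move. -/
def moveRight : ∀ g : PGame, RightMoves g → PGame
  | mk _ _r _ R => R

/-- `IsOption x y` means that `x` is either a left or right option for `y`. -/
inductive IsOption : PGame → PGame → Prop
  | moveLeft {x : PGame} (i : x.LeftMoves) : IsOption (x.moveLeft i) x
  | moveRight {x : PGame} (i : x.RightMoves) : IsOption (x.moveRight i) x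

/-- `Subsequent x y` says that `x` can be obtained by playing some nonempty sequence of moves
from `y`. -/
def Subsequent : PGame → PGame → Prop :=
  Relation.TransGen IsOption

/-- The pre-game `Zero` is defined by `0 = { | }`. -/
instance : Zero PGame :=
  ⟨⟨PEmpty, PEmpty, PEmpty.elim, PEmpty.elim⟩⟩

/-- The pre-game `star`, which is fuzzy with zero. -/
def star : PGame.{u} :=
  ⟨PUnit, PUnit, fun _ => 0, fun _ => 0⟩

/-- The sum of `x = {xL | xR}` and `y = {yL | yR}` is `{xL + y, x + yL | xR + y, x + yR}`. -/
noncomputable instance : Add PGame.{u} :=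
  ⟨fun x y => by
    induction x generalizing y with | mk xl xr _ _ IHxl IHxr => _
    induction y with | mk yl yr yL yR IHyl IHyr => _
    have y := mk yl yr yL yR
    refine ⟨xl ⊕ yl, xr ⊕ yr, Sum.rec ?_ ?_, Sum.rec ?_ ?_⟩
    · exact fun i => IHxl i y
    · exact IHyl
    · exact fun i => IHxr i y
    · exact IHyr⟩

end PGame

end SetTheory

open SetTheory

namespace Misere

/-- Misère winning: `(wins G).1` means Left, moving first on `G`, wins under misère play;
`(wins G).2` means Right, moving first, wins. The player unable to move wins. -/
def wins : PGame → Prop × Prop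
  | ⟨α, β, L, R⟩ =>
    (IsEmpty α ∨ ∃ i, ¬ (wins (L i)).2,
     IsEmpty β ∨ ∃ j, ¬ (wins (R j)).1)

/-- Left wins moving first under misère play. -/
def LeftFirst (G : PGame) : Prop := (wins G).1

/-- Right wins moving first under misère play. -/
def RightFirst (G : PGame) : Prop := (wins G).2

/-- Normal-play winning: `(nwins G).1` means Left moving first wins (player unable to move loses). -/
def nwins : PGame → Prop × Prop
  | ⟨α, β, L, R⟩ =>
    (∃ i, ¬ (nwins (L i)).2,
     ∃ j, ¬ (nwins (R j)).1)

/-- Outcome classes. -/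
inductive Outcome : Type
  | L | R | N | P
  deriving DecidableEq

/-- The partial order on outcomes: L > P > R, L > N > R, with P and N incomparable. -/
instance : LE Outcome := ⟨fun a b => a = b ∨ a = .R ∨ b = .L⟩

open Classical in
/-- The misère outcome of a game. -/
noncomputable def misereOutcome (G : PGame) : Outcome :=
  if (wins G).1 then (if (wins G).2 then .N else .L)
  else (if (wins G).2 then .R else .P)

open Classical in
/-- The normal-play outcome of a game. -/
noncomputable def normalOutcome (G : PGame) : Outcome :=
  if (nwins G).1 then (if (nwins G).2 then .N else .L)
  else (if (nwins G).2 then .R else .P)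

/-- A game is dicot if every subposition has a Left option iff it has a Right option. -/
def Dicot : PGame → Prop
  | ⟨α, β, L, R⟩ => (IsEmpty α ↔ IsEmpty β) ∧ (∀ i, Dicot (L i)) ∧ (∀ j, Dicot (R j))

/-- A dead Left end: a Left end all of whose followers are Left ends. -/
def DeadLeftEnd : PGame → Prop
  | ⟨α, _β, _L, R⟩ => IsEmpty α ∧ ∀ j, DeadLeftEnd (R j)

/-- A dead Right end: a Right end all of whose followers are Right ends. -/
def DeadRightEnd : PGame → Prop
  | ⟨_α, β, L, _R⟩ => IsEmpty β ∧ ∀ i, DeadRightEnd (L i)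

/-- A follower of `G` is any position reachable from `G`, including `G` itself. -/
def Follower (H G : PGame) : Prop := H = G ∨ PGame.Subsequent H G

/-- An end: a position where some player has no move. -/
def IsEnd (G : PGame) : Prop := IsEmpty G.LeftMoves ∨ IsEmpty G.RightMoves

/-- A game is dead-ending if every one of its end followers is a dead end. -/
def DeadEnding (G : PGame) : Prop :=
  ∀ H, Follower H G → IsEnd H → (DeadLeftEnd H ∨ DeadRightEnd H)

end Misere

namespace Misere

/-- The game `{0, * | *}`. -/
def gZS : PGame := PGame.mk Bool PUnit (fun b => if b then PGame.star else 0)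
  (fun _ => PGame.star)

/-! Write `G = {0, * | *}`. By induction on a dicot `X`: if Left wins `X` moving first then she
wins `G + X` moving first, and if Right wins `G + X` moving first then he wins `X` moving first,
which is `o⁻(X) ≤ o⁻(G + X)`. Left copies her winning move in `X`, except when `X` has no Left
move; then, `X` being dicot, `X` has no move at all, and Left plays `G → *`, after which Right can
only leave `0 + X`, where Left is unable to move and wins. Right's move `G → *` never helps him,
since Left answers `* → 0`, reaching `0 + X` with Right to move. -/

open PGame

instance isEmpty_leftMoves_zero : IsEmpty (LeftMoves 0) := inferInstanceAs (IsEmpty PEmpty)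

instance isEmpty_rightMoves_zero : IsEmpty (RightMoves 0) := inferInstanceAs (IsEmpty PEmpty)

theorem leftFirst_iff {G : PGame} :
    LeftFirst G ↔ IsEmpty G.LeftMoves ∨ ∃ i, ¬RightFirst (G.moveLeft i) := by
  cases G; rfl

theorem rightFirst_iff {G : PGame} :
    RightFirst G ↔ IsEmpty G.RightMoves ∨ ∃ j, ¬LeftFirst (G.moveRight j) := by
  cases G; rfl

theorem misereOutcome_le_iff {G H : PGame} : misereOutcome G ≤ misereOutcome H ↔
    (LeftFirst G → LeftFirst H) ∧ (RightFirst H → RightFirst G) := by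
  unfold misereOutcome LeftFirst RightFirst
  split_ifs <;> simp_all [LE.le]

theorem leftFirst_add_iff {x y : PGame} : LeftFirst (x + y) ↔
    (IsEmpty x.LeftMoves ∧ IsEmpty y.LeftMoves) ∨
      (∃ i, ¬RightFirst (x.moveLeft i + y)) ∨ ∃ i, ¬RightFirst (x + y.moveLeft i) := by
  cases x; cases y
  exact or_congr isEmpty_sum Sum.exists

theorem rightFirst_add_iff {x y : PGame} : RightFirst (x + y) ↔
    (IsEmpty x.RightMoves ∧ IsEmpty y.RightMoves) ∨
      (∃ j, ¬LeftFirst (x.moveRight j + y)) ∨ ∃ j, ¬LeftFirst (x + y.moveRight j) := by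
  cases x; cases y
  exact or_congr isEmpty_sum Sum.exists

theorem wins_zero_add (x : PGame) : wins (0 + x) = wins x := by
  induction x with
  | mk _ _ L R ihl ihr =>
    refine Prod.ext (propext ?_) (propext ?_)
    · change LeftFirst _ ↔ LeftFirst _
      rw [leftFirst_add_iff, leftFirst_iff]
      simp only [isEmpty_leftMoves_zero, true_and, IsEmpty.exists_iff, false_or]
      exact or_congr_right (exists_congr fun i => not_congr (congrArg Prod.snd (ihl i)).to_iff)
    · change RightFirst _ ↔ RightFirst _
      rw [rightFirst_add_iff, rightFirst_iff]
      simp only [isEmpty_rightMoves_zero, true_and, IsEmpty.exists_iff, false_or]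
      exact or_congr_right (exists_congr fun j => not_congr (congrArg Prod.fst (ihr j)).to_iff)

theorem leftFirst_zero_add_iff {x : PGame} : LeftFirst (0 + x) ↔ LeftFirst x := by
  rw [LeftFirst, LeftFirst, wins_zero_add]

theorem rightFirst_zero_add_iff {x : PGame} : RightFirst (0 + x) ↔ RightFirst x := by
  rw [RightFirst, RightFirst, wins_zero_add]

theorem leftFirst_star_add {x : PGame} (hx : ¬RightFirst x) : LeftFirst (star + x) :=
  leftFirst_add_iff.2 (Or.inr (Or.inl ⟨PUnit.unit, rightFirst_zero_add_iff.not.2 hx⟩))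

theorem not_rightFirst_star_add {x : PGame} [IsEmpty x.RightMoves] (hx : LeftFirst x) :
    ¬RightFirst (star + x) := by
  rw [rightFirst_add_iff]
  rintro (⟨hstar, -⟩ | ⟨_, hj⟩ | ⟨j, -⟩)
  · exact hstar.false PUnit.unit
  · exact hj (leftFirst_zero_add_iff.2 hx)
  · exact isEmptyElim j

theorem leftFirst_gZS_add {x : PGame} (hend : IsEmpty x.LeftMoves → IsEmpty x.RightMoves)
    (ih : ∀ i, RightFirst (gZS + x.moveLeft i) → RightFirst (x.moveLeft i))
    (hx : LeftFirst x) : LeftFirst (gZS + x) := by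
  rw [leftFirst_add_iff]
  rcases leftFirst_iff.1 hx with hl | ⟨i, hi⟩
  · have := hend hl
    exact Or.inr (Or.inl ⟨true, not_rightFirst_star_add hx⟩)
  · exact Or.inr (Or.inr ⟨i, mt (ih i) hi⟩)

theorem rightFirst_of_rightFirst_gZS_add {x : PGame}
    (ih : ∀ j, LeftFirst (x.moveRight j) → LeftFirst (gZS + x.moveRight j))
    (hx : RightFirst (gZS + x)) : RightFirst x := by
  rcases rightFirst_add_iff.1 hx with ⟨hgZS, -⟩ | ⟨_, hj⟩ | ⟨j, hj⟩
  · exact (hgZS.false PUnit.unit).elim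
  · exact not_not.1 (mt leftFirst_star_add hj)
  · exact rightFirst_iff.2 (Or.inr ⟨j, mt (ih j) hj⟩)

theorem misereOutcome_le_gZS_add {x : PGame} (hx : Dicot x) :
    misereOutcome x ≤ misereOutcome (gZS + x) := by
  induction x with
  | mk _ _ L R ihl ihr =>
    obtain ⟨hend, hdl, hdr⟩ := hx
    exact misereOutcome_le_iff.2
      ⟨leftFirst_gZS_add hend.1 fun i => (misereOutcome_le_iff.1 (ihl i (hdl i))).2,
        rightFirst_of_rightFirst_gZS_add fun j => (misereOutcome_le_iff.1 (ihr j (hdr j))).1⟩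

/-- `{0, * | *} ≥ 0` modulo the universe of dicot games, even though
`{0,*|*}` is not a Left end. -/
theorem ge_zero_mod_dicot :
    (∀ X : PGame, Dicot X → misereOutcome X ≤ misereOutcome (gZS + X)) ∧
      Nonempty gZS.LeftMoves :=
  ⟨fun _ => misereOutcome_le_gZS_add, ⟨true⟩⟩

end Misere
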